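/- arXiv:1010.5382 — 2 statements merged into one kernel-verified Lean document; each statement's English description precedes it below -/
import Mathlib

section
/- Converse for a single bit over the noiseless-feedback Poisson channel with zero dark current, reduced form: let x : [0,∞) → [0,∞) be measurable and locally integrable, let T₁ be a nonnegative random variable with P(T₁ > t) = exp(−∫₀ᵗ x(s) ds) for all t ≥ 0, and let T ≥ 0. Suppose the conditional probability of error given D = 1, namely P(T₁ > T) = exp(−∫₀^T x(s) ds), is at most ε for some ε ∈ [0,1]. Then the energy used to convey D = 1 satisfies ℰ₁ := E[∫₀^{min(T₁,T)} x(s) ds] ≥ 1 − ε, and hence the average energy over the two equiprobable messages (with the zero message sent with the all-zero input, so ℰ₀ = 0) satisfies (ℰ₀ + ℰ₁)/2 ≥ (1 − ε)/2. -/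
open MeasureTheory Real Set

/-!
Write `Λ t = ∫₀ᵗ x` for the cumulative intensity. By the intermediate value theorem every level
`t ∈ [0, Λ T]` is attained as `t = Λ c` with `c ∈ [0, T]`, and `T₁ > c` forces
`Λ (min T₁ T) ≥ t`; hence `P(Λ (min T₁ T) ≥ t) ≥ P(T₁ > c) = e^{-t}`. Integrating this tail bound
over `(0, Λ T]` (layer cake) gives `E[Λ (min T₁ T)] ≥ 1 - e^{-Λ T} ≥ 1 - ε`.
-/

theorem integral_exp_neg_Ioc {L : ℝ} (hL : 0 ≤ L) :
    ∫ t in Ioc 0 L, exp (-t) = 1 - exp (-L) := by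
  rw [← intervalIntegral.integral_of_le hL,
    intervalIntegral.integral_comp_neg (fun u => exp u), integral_exp]
  simp

theorem monotoneOn_primitive_of_nonneg {f : ℝ → ℝ} {a b : ℝ} (hf : IntegrableOn f (Icc a b))
    (hf_nn : ∀ t ∈ Icc a b, 0 ≤ f t) :
    MonotoneOn (fun t => ∫ s in a..t, f s) (Icc a b) := fun u hu v hv huv =>
  intervalIntegral.integral_mono_interval le_rfl hu.1 huv
    (ae_restrict_of_forall_mem measurableSet_Ioc fun t ht => hf_nn t ⟨ht.1.le, ht.2.trans hv.2⟩)
    ((intervalIntegrable_iff_integrableOn_Icc_of_le hv.1).2 (hf.mono_set (Icc_subset_Icc_right hv.2)))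

section

variable {Ω : Type*} [MeasurableSpace Ω] {μ : Measure Ω}

theorem setIntegral_le_integral_of_ofReal_le_meas_le {f : Ω → ℝ} (hf : Integrable f μ)
    (hf_nn : 0 ≤ᵐ[μ] f) {φ : ℝ → ℝ} {s : Set ℝ} (hs : MeasurableSet s) (hs_pos : s ⊆ Ioi 0)
    (hφ : IntegrableOn φ s) (hφ_nn : ∀ t ∈ s, 0 ≤ φ t)
    (hφf : ∀ t ∈ s, ENNReal.ofReal (φ t) ≤ μ {ω | t ≤ f ω}) :
    ∫ t in s, φ t ≤ ∫ ω, f ω ∂μ := by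
  rw [← ENNReal.ofReal_le_ofReal_iff (integral_nonneg_of_ae hf_nn),
    ofReal_integral_eq_lintegral_ofReal hφ (ae_restrict_of_forall_mem hs hφ_nn),
    ofReal_integral_eq_lintegral_ofReal hf hf_nn,
    lintegral_eq_lintegral_meas_le μ hf_nn hf.aemeasurable]
  calc ∫⁻ t in s, ENNReal.ofReal (φ t)
      ≤ ∫⁻ t in s, μ {ω | t ≤ f ω} := setLIntegral_mono' hs hφf
    _ ≤ ∫⁻ t in Ioi 0, μ {ω | t ≤ f ω} := lintegral_mono_set hs_pos

variable {Λ : ℝ → ℝ} {τ : Ω → ℝ} {T : ℝ}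

theorem ofReal_exp_neg_le_meas_le_comp_min (hT : 0 ≤ T) (hΛ_cont : ContinuousOn Λ (Icc 0 T))
    (hΛ_mono : MonotoneOn Λ (Icc 0 T))
    (hsurv : ∀ c ∈ Icc 0 T, μ {ω | c < τ ω} = ENNReal.ofReal (exp (-Λ c)))
    {t : ℝ} (ht : t ∈ Icc (Λ 0) (Λ T)) :
    ENNReal.ofReal (exp (-t)) ≤ μ {ω | t ≤ Λ (min (τ ω) T)} := by
  obtain ⟨c, hc, rfl⟩ := intermediate_value_Icc hT hΛ_cont ht
  rw [← hsurv c hc]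
  refine measure_mono fun ω hω => hΛ_mono hc ?_ (le_min (le_of_lt hω) hc.2)
  exact ⟨le_min (hc.1.trans (le_of_lt hω)) hT, min_le_right _ _⟩

theorem one_sub_exp_neg_le_integral_comp_min [IsFiniteMeasure μ] (hT : 0 ≤ T)
    (hΛ_cont : ContinuousOn Λ (Icc 0 T)) (hΛ_mono : MonotoneOn Λ (Icc 0 T)) (hΛ_zero : Λ 0 = 0)
    (hτ_meas : Measurable τ) (hτ_nn : ∀ ω, 0 ≤ τ ω)
    (hsurv : ∀ c ∈ Icc 0 T, μ {ω | c < τ ω} = ENNReal.ofReal (exp (-Λ c))) :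
    1 - exp (-Λ T) ≤ ∫ ω, Λ (min (τ ω) T) ∂μ := by
  have hmin : ∀ ω, min (τ ω) T ∈ Icc 0 T := fun ω => ⟨le_min (hτ_nn ω) hT, min_le_right _ _⟩
  have hT_mem : T ∈ Icc 0 T := ⟨hT, le_rfl⟩
  have hY_nn : ∀ ω, 0 ≤ Λ (min (τ ω) T) := fun ω =>
    hΛ_zero ▸ hΛ_mono ⟨le_rfl, hT⟩ (hmin ω) (hmin ω).1
  have hY_meas : Measurable fun ω => Λ (min (τ ω) T) :=
    hΛ_cont.domRestrict.measurable.comp ((hτ_meas.min measurable_const).subtype_mk (h := hmin))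
  have hY_int : Integrable (fun ω => Λ (min (τ ω) T)) μ :=
    Integrable.of_bound hY_meas.aestronglyMeasurable (Λ T) <| ae_of_all _ fun ω => by
      rw [norm_of_nonneg (hY_nn ω)]
      exact hΛ_mono (hmin ω) hT_mem (hmin ω).2
  calc 1 - exp (-Λ T) = ∫ t in Ioc 0 (Λ T), exp (-t) :=
        (integral_exp_neg_Ioc (hΛ_zero ▸ hΛ_mono ⟨le_rfl, hT⟩ hT_mem hT)).symm
    _ ≤ ∫ ω, Λ (min (τ ω) T) ∂μ :=
        setIntegral_le_integral_of_ofReal_le_meas_le hY_int (ae_of_all _ hY_nn) measurableSet_Ioc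
          Ioc_subset_Ioi_self (continuous_neg.rexp.integrableOn_Icc.mono_set Ioc_subset_Icc_self)
          (fun t _ => (exp_pos _).le) fun t ht =>
            ofReal_exp_neg_le_meas_le_comp_min hT hΛ_cont hΛ_mono hsurv
              ⟨hΛ_zero.symm ▸ ht.1.le, ht.2⟩

end

theorem converse_one_bit_general
    {Ω : Type*} [MeasurableSpace Ω] (μ : Measure Ω) [IsProbabilityMeasure μ]
    (x : ℝ → ℝ)
    (hx_nonneg : ∀ t : ℝ, 0 ≤ t → 0 ≤ x t)
    (hx_loc : ∀ T : ℝ, 0 ≤ T → IntegrableOn x (Set.Icc 0 T))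
    (T₁ : Ω → ℝ) (hT₁_meas : Measurable T₁)
    (hT₁_nonneg : ∀ ω, 0 ≤ T₁ ω)
    (hsurv : ∀ t : ℝ, 0 ≤ t →
      μ {ω | t < T₁ ω} = ENNReal.ofReal (Real.exp (-(∫ s in (0:ℝ)..t, x s))))
    (T : ℝ) (hT : 0 ≤ T)
    (ε : ℝ)
    (herr : Real.exp (-(∫ s in (0:ℝ)..T, x s)) ≤ ε) :
    1 - ε ≤ (∫ ω, (∫ s in (0:ℝ)..(min (T₁ ω) T), x s) ∂μ)
      ∧ (1 - ε) / 2 ≤ (0 + ∫ ω, (∫ s in (0:ℝ)..(min (T₁ ω) T), x s) ∂μ) / 2 := by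
  have hΛ_cont : ContinuousOn (fun t => ∫ s in (0:ℝ)..t, x s) (Icc 0 T) := by
    simpa [uIcc_of_le hT] using
      intervalIntegral.continuousOn_primitive_interval (a := 0) (b := T) (μ := volume)
        (by simpa [uIcc_of_le hT] using hx_loc T hT)
  have hΛ_mono : MonotoneOn (fun t => ∫ s in (0:ℝ)..t, x s) (Icc 0 T) :=
    monotoneOn_primitive_of_nonneg (hx_loc T hT) fun t ht => hx_nonneg t ht.1
  have hE := one_sub_exp_neg_le_integral_comp_min hT hΛ_cont hΛ_mono
    intervalIntegral.integral_same hT₁_meas hT₁_nonneg fun c hc => hsurv c hc.1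
  constructor <;> linarith

/-- Converse for one bit over the noiseless-feedback Poisson channel with zero dark
current (reduced form): if the error probability given `D = 1`, namely
`P(T₁ > T) = exp (-∫₀ᵀ x)`, is at most `ε`, then the energy used to convey `D = 1`,
`ℰ₁ = E[∫₀^{min(T₁,T)} x]`, is at least `1 - ε`, and the average energy over the two
equiprobable messages (with `ℰ₀ = 0`) is at least `(1 - ε)/2`. -/
theorem converse_one_bit
    {Ω : Type*} [MeasurableSpace Ω] (μ : Measure Ω) [IsProbabilityMeasure μ]
    (x : ℝ → ℝ) (hx_meas : Measurable x)
    (hx_nonneg : ∀ t : ℝ, 0 ≤ t → 0 ≤ x t)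
    (hx_loc : ∀ T : ℝ, 0 ≤ T → IntegrableOn x (Set.Icc 0 T))
    (T₁ : Ω → ℝ) (hT₁_meas : Measurable T₁)
    (hT₁_nonneg : ∀ ω, 0 ≤ T₁ ω)
    (hsurv : ∀ t : ℝ, 0 ≤ t →
      μ {ω | t < T₁ ω} = ENNReal.ofReal (Real.exp (-(∫ s in (0:ℝ)..t, x s))))
    (T : ℝ) (hT : 0 ≤ T)
    (ε : ℝ) (hε : ε ∈ Set.Icc (0:ℝ) 1)
    (herr : Real.exp (-(∫ s in (0:ℝ)..T, x s)) ≤ ε) :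
    1 - ε ≤ (∫ ω, (∫ s in (0:ℝ)..(min (T₁ ω) T), x s) ∂μ)
      ∧ (1 - ε) / 2 ≤ (0 + ∫ ω, (∫ s in (0:ℝ)..(min (T₁ ω) T), x s) ∂μ) / 2 :=
  converse_one_bit_general μ x hx_nonneg hx_loc T₁ hT₁_meas hT₁_nonneg hsurv T hT ε herr
end

section
/- Achievability for sending log₂ M bits with zero dark current: let M ≥ 2 be an integer and A > 0. For every T > 0 partition [0,T) into the M−1 intervals [(m−1)T/(M−1), mT/(M−1)) for m = 1, …, M−1, and to send nonzero message m transmit constant power A on its interval until the first count or the end of the interval. Then for each nonzero message m the conditional error probability equals e^{−A T/(M−1)}, the energy used is ℰ_m = 1 − e^{−A T/(M−1)} ≤ 1, and the average energy over the M equiprobable messages (with ℰ₀ = 0) equals ((M−1)/M)(1 − e^{−A T/(M−1)}) ≤ (M−1)/M. In particular, for every ε > 0 there exists T > 0 such that all M conditional error probabilities are below ε while the average energy is at most (M−1)/M. -/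
/-!
Each nonzero message is sent on a slot of length `s = T/(M-1)`, and its first count time
`X` is exponential with rate `A`. The error probability is `P(X > s) = exp (-A s)`. Writing
the energy through the truncated layer cake formula gives
`A · E[min X s] = A ∫₀ˢ P(X > t) dt = 1 - exp (-A s)`. Averaging with the zero message
gives the factor `(M-1)/M`, and the error probability tends to `0` as `T → ∞`.
-/

open MeasureTheory Real

theorem intervalIntegral_exp_neg_mul {A : ℝ} (hA : A ≠ 0) (s : ℝ) :
    ∫ t in (0 : ℝ)..s, exp (-(A * t)) = (1 - exp (-(A * s))) / A := by
  simp only [← neg_mul]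
  rw [intervalIntegral.integral_comp_mul_left _ (neg_ne_zero.mpr hA), integral_exp]
  simp only [mul_zero, exp_zero, smul_eq_mul]
  field_simp
  ring

section TruncatedMean

variable {Ω : Type*} [MeasurableSpace Ω] {μ : Measure Ω} [IsFiniteMeasure μ] {X : Ω → ℝ}

theorem integral_min_eq_intervalIntegral_measureReal_lt (hX : AEMeasurable X μ)
    (hX₀ : 0 ≤ᵐ[μ] X) {s : ℝ} (hs : 0 ≤ s) :
    ∫ ω, min (X ω) s ∂μ = ∫ t in (0 : ℝ)..s, μ.real {ω | t < X ω} := by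
  have hmin₀ : 0 ≤ᵐ[μ] fun ω ↦ min (X ω) s := by
    filter_upwards [hX₀] with ω hω using le_min hω hs
  have hint : Integrable (fun ω ↦ min (X ω) s) μ := by
    refine (integrable_const s).mono' (hX.min aemeasurable_const).aestronglyMeasurable ?_
    filter_upwards [hmin₀] with ω hω
    rw [Real.norm_eq_abs, abs_of_nonneg hω]
    exact min_le_right _ _
  have htail : ∀ t, μ.real {ω | t < min (X ω) s}
      = Set.indicator (Set.Iio s) (fun t ↦ μ.real {ω | t < X ω}) t := by
    intro t
    by_cases ht : t < s <;> simp [ht]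
  rw [hint.integral_eq_integral_meas_lt hmin₀, funext htail,
    setIntegral_indicator measurableSet_Iio, Set.Ioi_inter_Iio,
    ← integral_Ioc_eq_integral_Ioo, intervalIntegral.integral_of_le hs]

theorem mul_integral_min_of_measure_lt_eq_exp (hX : AEMeasurable X μ) (hX₀ : 0 ≤ᵐ[μ] X)
    {A : ℝ} (hA : A ≠ 0)
    (hsurv : ∀ t : ℝ, 0 ≤ t → μ {ω | t < X ω} = ENNReal.ofReal (exp (-(A * t))))
    {s : ℝ} (hs : 0 ≤ s) :
    A * ∫ ω, min (X ω) s ∂μ = 1 - exp (-(A * s)) := by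
  have htail : Set.EqOn (fun t ↦ μ.real {ω | t < X ω}) (fun t ↦ exp (-(A * t)))
      (Set.uIcc 0 s) := by
    intro t ht
    rw [Set.uIcc_of_le hs] at ht
    simp only [measureReal_def, hsurv t ht.1, ENNReal.toReal_ofReal (exp_nonneg _)]
  rw [integral_min_eq_intervalIntegral_measureReal_lt hX hX₀ hs,
    intervalIntegral.integral_congr htail, intervalIntegral_exp_neg_mul hA]
  field_simp

end TruncatedMean

theorem inv_mul_zero_add_sum_Ioo_eq {M : ℕ} (hM : 1 ≤ M) {E : ℕ → ℝ} {c : ℝ}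
    (hE : ∀ m ∈ Finset.Ioo 0 M, E m = c) :
    (M : ℝ)⁻¹ * (0 + ∑ m ∈ Finset.Ioo 0 M, E m) = ((M : ℝ) - 1) / M * c := by
  rw [Finset.sum_congr rfl hE, Finset.sum_const, Nat.card_Ioo, nsmul_eq_mul, zero_add,
    Nat.sub_zero, Nat.cast_sub hM, Nat.cast_one]
  ring

theorem exists_pos_exp_neg_mul_lt {c ε : ℝ} (hc : 0 < c) (hε : 0 < ε) :
    ∃ T : ℝ, 0 < T ∧ exp (-(c * T)) < ε := by
  have h : Filter.Tendsto (fun T ↦ exp (-(c * T))) Filter.atTop (nhds 0) :=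
    tendsto_exp_neg_atTop_nhds_zero.comp (Filter.tendsto_id.const_mul_atTop hc)
  exact ((Filter.eventually_gt_atTop 0).and (h.eventually (gt_mem_nhds hε))).exists

/-- Achievability for sending `log₂ M` bits with zero dark current: with the
interval `[0,T)` split into `M - 1` equal subintervals and nonzero message `m`
sent with constant power `A` on its subinterval until the first count (whose time
`T₁ m`, measured from the start of the subinterval, is exponential with rate `A`),
each nonzero message has conditional error probability `exp (-A T/(M-1))`, uses
energy `ℰ_m = 1 - exp (-A T/(M-1)) ≤ 1`, and the average energy over the `M`
equiprobable messages (with `ℰ₀ = 0`) equals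
`((M-1)/M) (1 - exp (-A T/(M-1))) ≤ (M-1)/M`. In particular for every `ε > 0`
there is `T > 0` making all conditional error probabilities less than `ε` while
the average energy stays at most `(M-1)/M`. -/
theorem achievability_M_messages
    (M : ℕ) (hM : 2 ≤ M) (A : ℝ) (hA : 0 < A)
    {Ω : Type*} [MeasurableSpace Ω] (μ : Measure Ω) [IsProbabilityMeasure μ]
    (T₁ : ℕ → Ω → ℝ)
    (hT₁_meas : ∀ m, 1 ≤ m → m < M → Measurable (T₁ m))
    (hT₁_nonneg : ∀ m, 1 ≤ m → m < M → ∀ ω, 0 ≤ T₁ m ω)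
    (hsurv : ∀ m, 1 ≤ m → m < M → ∀ t : ℝ, 0 ≤ t →
      μ {ω | t < T₁ m ω} = ENNReal.ofReal (Real.exp (-(A * t)))) :
    (∀ T : ℝ, 0 < T →
      (∀ m, 1 ≤ m → m < M →
        (μ {ω | T / ((M : ℝ) - 1) < T₁ m ω}).toReal
            = Real.exp (-(A * T / ((M : ℝ) - 1)))
        ∧ A * (∫ ω, min (T₁ m ω) (T / ((M : ℝ) - 1)) ∂μ)
            = 1 - Real.exp (-(A * T / ((M : ℝ) - 1)))
        ∧ A * (∫ ω, min (T₁ m ω) (T / ((M : ℝ) - 1)) ∂μ) ≤ 1)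
      ∧ ((M : ℝ))⁻¹ * (0 + ∑ m ∈ Finset.Ioo 0 M,
            A * (∫ ω, min (T₁ m ω) (T / ((M : ℝ) - 1)) ∂μ))
          = ((M : ℝ) - 1) / M * (1 - Real.exp (-(A * T / ((M : ℝ) - 1))))
      ∧ ((M : ℝ))⁻¹ * (0 + ∑ m ∈ Finset.Ioo 0 M,
            A * (∫ ω, min (T₁ m ω) (T / ((M : ℝ) - 1)) ∂μ))
          ≤ ((M : ℝ) - 1) / M)
    ∧ ∀ ε : ℝ, 0 < ε → ∃ T : ℝ, 0 < T ∧
        Real.exp (-(A * T / ((M : ℝ) - 1))) < ε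
        ∧ ((M : ℝ))⁻¹ * (0 + ∑ m ∈ Finset.Ioo 0 M,
              A * (∫ ω, min (T₁ m ω) (T / ((M : ℝ) - 1)) ∂μ))
            ≤ ((M : ℝ) - 1) / M := by
  have hM₁ : (0 : ℝ) < (M : ℝ) - 1 := by
    have : (2 : ℝ) ≤ M := by exact_mod_cast hM
    linarith
  have energy : ∀ T : ℝ, 0 < T → ∀ m ∈ Finset.Ioo 0 M,
      A * (∫ ω, min (T₁ m ω) (T / ((M : ℝ) - 1)) ∂μ)
        = 1 - Real.exp (-(A * T / ((M : ℝ) - 1))) := by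
    intro T hT m hm
    obtain ⟨h₁, h₂⟩ := Finset.mem_Ioo.mp hm
    rw [mul_div_assoc]
    exact mul_integral_min_of_measure_lt_eq_exp (hT₁_meas m h₁ h₂).aemeasurable
      (ae_of_all _ (hT₁_nonneg m h₁ h₂)) hA.ne' (hsurv m h₁ h₂) (div_pos hT hM₁).le
  have average_le : ∀ T : ℝ, 0 < T → ((M : ℝ))⁻¹ * (0 + ∑ m ∈ Finset.Ioo 0 M,
      A * (∫ ω, min (T₁ m ω) (T / ((M : ℝ) - 1)) ∂μ)) ≤ ((M : ℝ) - 1) / M := fun T hT => by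
    rw [inv_mul_zero_add_sum_Ioo_eq (by omega) (energy T hT)]
    exact mul_le_of_le_one_right (by positivity)
      (by linarith [exp_pos (-(A * T / ((M : ℝ) - 1)))])
  refine ⟨fun T hT => ⟨fun m h₁ h₂ => ⟨?_, ?_, ?_⟩,
    inv_mul_zero_add_sum_Ioo_eq (by omega) (energy T hT), average_le T hT⟩, fun ε hε => ?_⟩
  · rw [hsurv m h₁ h₂ _ (div_pos hT hM₁).le, ENNReal.toReal_ofReal (exp_nonneg _), mul_div_assoc]
  · exact energy T hT m (Finset.mem_Ioo.mpr ⟨h₁, h₂⟩)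
  · rw [energy T hT m (Finset.mem_Ioo.mpr ⟨h₁, h₂⟩)]
    linarith [exp_pos (-(A * T / ((M : ℝ) - 1)))]
  · obtain ⟨T, hT, hlt⟩ := exists_pos_exp_neg_mul_lt (div_pos hA hM₁) hε
    refine ⟨T, hT, ?_, average_le T hT⟩
    rwa [mul_div_right_comm]
end
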